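/- For the binary-cycling example, the kernel \tilde{K}(x,y) = K(x, g^{-1}y) satisfies (\tilde{K} − Π)^N = 0, where Π is the kernel with all entries equal to 2^{−N}; i.e., \tilde{K} − Π is nilpotent of index at most N. -/

import Mathlib

open BigOperators Finset

def Kseq {V : Type*} [Fintype V] (K : Matrix V V ℝ) (g : Equiv.Perm V) (i : ℕ) :
    Matrix V V ℝ :=
  Matrix.of fun x y => K ((g ^ (i - 1)) x) ((g ^ (i - 1)) y)

def Kcomp {V : Type*} [Fintype V] [DecidableEq V] (K : Matrix V V ℝ) (g : Equiv.Perm V) :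
    ℕ → Matrix V V ℝ
  | 0 => 1
  | n + 1 => Kcomp K g n * Kseq K g (n + 1)

def tilde {V : Type*} [Fintype V] (K : Matrix V V ℝ) (g : Equiv.Perm V) : Matrix V V ℝ :=
  Matrix.of fun x y => K x (g.symm y)

/-- Standard basis vector of {0,1}^N with a 1 in position j. -/
def eVec (N : ℕ) (j : Fin N) : Fin N → ZMod 2 := fun k => if k = j then 1 else 0

/-- The kernel randomizing the first coordinate of a binary vector. -/
noncomputable def Kbin (N : ℕ) [NeZero N] : Matrix (Fin N → ZMod 2) (Fin N → ZMod 2) ℝ :=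
  Matrix.of fun x y => if y = x ∨ y = x + eVec N 0 then 1 / 2 else 0

/-- The cyclic left shift g(x₁,…,x_N) = (x₂,…,x_N,x₁). -/
def shiftL (N : ℕ) : Equiv.Perm (Fin N → ZMod 2) :=
  Equiv.arrowCongr (finRotate N).symm (Equiv.refl (ZMod 2))

/-! `K̃` rerandomizes the first bit and then rotates left, so `n ≤ N` steps from `x` lead
uniformly, with probability `2⁻ⁿ` each, to the strings `y` with `y k = x (k + n)` whenever
`k + n < N`. At `n = N` every bit has been rerandomized, so `K̃ ^ N = Π`. As `K̃` is stochastic,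
`K̃ Π = Π`; hence `Π = K̃ ^ N` commutes with `K̃` and is idempotent, and `(K̃ - Π) ^ n = K̃ ^ n - Π`
for `n ≥ 1`. -/

open Function

theorem sub_pow_eq_zero_of_pow_eq_of_mul_eq {R : Type*} [Ring R] {a p : R} {n : ℕ} (hn : n ≠ 0)
    (hpow : a ^ n = p) (hap : a * p = p) : (a - p) ^ n = 0 := by
  have hpow_mul : ∀ k, a ^ k * p = p := fun k => by
    induction k with
    | zero => rw [pow_zero, one_mul]
    | succ k ih => rw [pow_succ, mul_assoc, hap, ih]
  have hpa : p * a = p := by rw [← hpow, ← pow_succ, pow_succ', hpow, hap]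
  have hpp : p * p = p := by nth_rewrite 1 [← hpow]; exact hpow_mul n
  have hsub_pow : ∀ k, (a - p) ^ (k + 1) = a ^ (k + 1) - p := fun k => by
    induction k with
    | zero => rw [zero_add, pow_one, pow_one]
    | succ k ih =>
      rw [pow_succ, ih, sub_mul, mul_sub, mul_sub, ← pow_succ, hpow_mul, hpa, hpp]
      abel
  obtain ⟨k, rfl⟩ := Nat.exists_eq_succ_of_ne_zero hn
  rw [hsub_pow, hpow, sub_self]

theorem Matrix.mul_of_const_of_sum_row_eq_one {l m o α : Type*} [Fintype m] [Semiring α]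
    (A : Matrix l m α) (c : α) (h : ∀ i, ∑ j, A i j = 1) :
    A * Matrix.of (fun (_ : m) (_ : o) => c) = Matrix.of fun _ _ => c := by
  ext i k
  simp [Matrix.mul_apply, ← Finset.sum_mul, h]

theorem sum_ite_eq_update {ι α M : Type*} [Fintype ι] [DecidableEq ι] [Fintype α] [DecidableEq α]
    [AddCommMonoid M] (f g : ι → α) (i : ι) (c : M) [Decidable (∀ j ≠ i, g j = f j)] :
    ∑ b : α, (if g = update f i b then c else 0) = if ∀ j ≠ i, g j = f j then c else 0 := by
  simp_rw [eq_update_iff, ite_and, Finset.sum_ite_eq, Finset.mem_univ, if_true]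

theorem sum_tilde_apply {V : Type*} [Fintype V] (K : Matrix V V ℝ)
    (g : Equiv.Perm V) (x : V) : ∑ y, tilde K g x y = ∑ y, K x y :=
  Equiv.sum_comp g.symm (K x)

def ShiftedAgree {N : ℕ} {α : Type*} (n : ℕ) (x y : Fin N → α) : Prop :=
  ∀ k m : Fin N, (m : ℕ) = k + n → y k = x m

instance {N : ℕ} {α : Type*} [DecidableEq α] (n : ℕ) (x y : Fin N → α) :
    Decidable (ShiftedAgree n x y) := by
  unfold ShiftedAgree; infer_instance

theorem shiftedAgree_zero_iff {N : ℕ} {α : Type*} (x y : Fin N → α) :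
    ShiftedAgree 0 x y ↔ x = y := by
  refine ⟨fun h => funext fun k => (h k k rfl).symm, ?_⟩
  rintro rfl k m hm
  obtain rfl : m = k := Fin.ext (by omega)
  rfl

theorem shiftedAgree_self {N : ℕ} {α : Type*} (x y : Fin N → α) : ShiftedAgree N x y :=
  fun k m hm => absurd m.isLt (by omega)

section Kbin

variable (N : ℕ) [NeZero N]

theorem Kbin_apply (x y : Fin N → ZMod 2) :
    Kbin N x y = if ∀ k ≠ 0, x k = y k then 1 / 2 else 0 := by
  have hflip : ∀ u v : ZMod 2, v = u ∨ v = u + 1 := by decide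
  refine if_congr ⟨?_, fun h => ?_⟩ rfl rfl
  · rintro (rfl | rfl) k hk <;> simp [eVec, hk]
  · rcases hflip (x 0) (y 0) with h0 | h0
    · left
      funext k
      by_cases hk : k = 0
      · rw [hk, h0]
      · exact (h k hk).symm
    · right
      funext k
      by_cases hk : k = 0
      · simp [hk, h0, eVec]
      · simp [hk, h k hk, eVec]

theorem Kbin_apply_eq_sum (x y : Fin N → ZMod 2) :
    Kbin N x y = ∑ a : ZMod 2, if x = update y 0 a then 1 / 2 else 0 := by
  rw [Kbin_apply, ← sum_ite_eq_update]

theorem sum_Kbin_row (x : Fin N → ZMod 2) : ∑ y, Kbin N x y = 1 := by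
  calc ∑ y, Kbin N x y = ∑ y, ∑ a : ZMod 2, if y = update x 0 a then (1 / 2 : ℝ) else 0 := by
        simp_rw [Kbin_apply, eq_comm (a := x _), ← sum_ite_eq_update]
    _ = ∑ _a : ZMod 2, (1 / 2 : ℝ) := by
        rw [Finset.sum_comm]
        simp_rw [Finset.sum_ite_eq', Finset.mem_univ, if_true]
    _ = 1 := by norm_num [ZMod.card]

theorem mul_tilde_Kbin_apply (M : Matrix (Fin N → ZMod 2) (Fin N → ZMod 2) ℝ)
    (x y : Fin N → ZMod 2) :
    (M * tilde (Kbin N) (shiftL N)) x y =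
      ∑ a : ZMod 2, M x (update ((shiftL N).symm y) 0 a) / 2 := by
  simp only [Matrix.mul_apply, tilde, Matrix.of_apply, Kbin_apply_eq_sum, Finset.mul_sum,
    mul_ite, mul_zero]
  rw [Finset.sum_comm]
  simp_rw [Finset.sum_ite_eq', Finset.mem_univ, if_true, mul_one_div]

theorem shiftedAgree_update_iff {n : ℕ} (hn : n < N) (x y : Fin N → ZMod 2) (a : ZMod 2) :
    ShiftedAgree n x (update ((shiftL N).symm y) 0 a) ↔
      a = x ⟨n, hn⟩ ∧ ShiftedAgree (n + 1) x y := by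
  obtain ⟨M, rfl⟩ := Nat.exists_eq_succ_of_ne_zero (NeZero.ne N)
  have hsucc (j : Fin M) : update ((shiftL (M + 1)).symm y) 0 a j.succ = y j.castSucc := by
    rw [update_of_ne j.succ_ne_zero]
    exact congrArg y ((finRotate _).symm_apply_eq.mpr (by simp [Fin.coeSucc_eq_succ]))
  have hlast (m : Fin (M + 1)) : (m : ℕ) ≠ M + (n + 1) := by omega
  unfold ShiftedAgree
  conv_lhs => rw [Fin.forall_fin_succ]
  conv_rhs => rw [Fin.forall_fin_succ']
  simp only [update_self, hsucc, Fin.val_zero, Fin.val_succ, Fin.val_last,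
    Fin.val_castSucc, hlast, false_imp_iff, implies_true, and_true, zero_add, add_assoc,
    Nat.add_comm 1 n]
  refine and_congr_left' ⟨fun h => h _ rfl, fun h m hm => ?_⟩
  obtain rfl : m = ⟨n, hn⟩ := Fin.ext hm
  exact h

theorem tilde_Kbin_pow_apply {n : ℕ} (hn : n ≤ N) (x y : Fin N → ZMod 2) :
    (tilde (Kbin N) (shiftL N) ^ n) x y = if ShiftedAgree n x y then (1 / 2) ^ n else 0 := by
  induction n generalizing y with
  | zero => simp [shiftedAgree_zero_iff, Matrix.one_apply]
  | succ n ih =>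
    rw [pow_succ, mul_tilde_Kbin_apply]
    simp_rw [ih (Nat.le_of_succ_le hn), shiftedAgree_update_iff N hn, ite_and, ite_div, zero_div,
      Finset.sum_ite_eq', Finset.mem_univ, if_true]
    split_ifs <;> ring

theorem tilde_Kbin_pow_self :
    tilde (Kbin N) (shiftL N) ^ N = Matrix.of fun _ _ => 1 / 2 ^ N := by
  ext x y
  rw [tilde_Kbin_pow_apply N le_rfl, if_pos (shiftedAgree_self x y), one_div_pow]
  rfl

end Kbin

/-- Example 3.9: K̃ - Π is nilpotent of index at most N, where Π is the uniform kernel. -/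
theorem stmt15 (N : ℕ) [NeZero N]
    (Pi : Matrix (Fin N → ZMod 2) (Fin N → ZMod 2) ℝ)
    (hPi : ∀ x y, Pi x y = 1 / 2 ^ N) :
    (tilde (Kbin N) (shiftL N) - Pi) ^ N = 0 := by
  obtain rfl : Pi = Matrix.of fun _ _ => (1 / 2 ^ N : ℝ) := Matrix.ext hPi
  refine sub_pow_eq_zero_of_pow_eq_of_mul_eq (NeZero.ne N) (tilde_Kbin_pow_self N) ?_
  exact Matrix.mul_of_const_of_sum_row_eq_one _ _ fun x => by rw [sum_tilde_apply, sum_Kbin_row]
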